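/- arXiv:1407.5563 — 3 statements merged into one kernel-verified Lean document; each statement's English description precedes it below -/
import Mathlib

section
/- Let (T,d,ρ) be a compact rooted real tree and a,r ∈ (0,∞) with a ≥ r/2. Then any two balls in the level set T(a) of radius r are either equal or disjoint; that is, for σ,σ' ∈ T(a), the sets Γ(σ,r) = B(σ,r)∩T(a) and Γ(σ',r) = B(σ',r)∩T(a) satisfy Γ(σ,r) = Γ(σ',r) or Γ(σ,r) ∩ Γ(σ',r) = ∅. -/
/-- A (rooted) real tree structure on a metric space `T`, given by the assignment
`seg x y` of the unique geodesic arc joining `x` to `y`: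
(i) there is an isometric parametrization of `seg x y` by `[0, dist x y]` with the
correct endpoints; (ii) any continuous injective arc from `x` to `y` has image `seg x y`. -/
structure IsRealTree {T : Type*} [MetricSpace T] (seg : T → T → Set T) : Prop where
  geodesic : ∀ x y : T, ∃ f : ℝ → T, f 0 = x ∧ f (dist x y) = y ∧
    (∀ s ∈ Set.Icc (0:ℝ) (dist x y), ∀ t ∈ Set.Icc (0:ℝ) (dist x y),
      dist (f s) (f t) = |s - t|) ∧ seg x y = f '' Set.Icc 0 (dist x y)
  unique_arc : ∀ x y : T, ∀ q : ℝ → T, ContinuousOn q (Set.Icc 0 1) →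
    Set.InjOn q (Set.Icc 0 1) → q 0 = x → q 1 = y →
    q '' Set.Icc 0 1 = seg x y

/-!
Every point `x` of the level set `T(a)` is the endpoint of an isometric path `f` from the
root. For two such points `x = f a` and `y = g a`, the paths agree exactly on `[0, b]`, where
`b` is their meeting time, and the concatenation of `f` backwards from `a` to `b` with `g` from
`b` to `a` is an injective arc, hence the geodesic from `x` to `y`. This gives
`d(x, y) = 2 (a - b)`. Three paths pairwise meeting at times `b₁`, `b₂`, `b₃` satisfy
`b₃ ≥ min b₁ b₂`, so the metric on `T(a)` is an ultrametric, and in an ultrametric space two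
balls of the same radius are equal or disjoint.
-/

open Set

noncomputable def meetTime {T : Type*} (a : ℝ) (f g : ℝ → T) : ℝ :=
  sSup {t ∈ Icc 0 a | f t = g t}

lemma le_meetTime {T : Type*} {a t : ℝ} {f g : ℝ → T} (ht : t ∈ Icc 0 a) (hfg : f t = g t) :
    t ≤ meetTime a f g :=
  le_csSup ⟨a, fun _ hs => hs.1.2⟩ ⟨ht, hfg⟩

section

variable {T : Type*} [MetricSpace T]

structure IsGeodesicFrom (ρ : T) (a : ℝ) (f : ℝ → T) : Prop where
  map_zero : f 0 = ρ
  dist_eq : ∀ s ∈ Icc (0 : ℝ) a, ∀ t ∈ Icc (0 : ℝ) a, dist (f s) (f t) = |s - t|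

namespace IsGeodesicFrom

variable {ρ : T} {a : ℝ} {f g : ℝ → T}

lemma dist_root (hf : IsGeodesicFrom ρ a f) {s : ℝ} (hs : s ∈ Icc 0 a) :
    dist ρ (f s) = s := by
  have h := hf.dist_eq 0 ⟨le_rfl, hs.1.trans hs.2⟩ s hs
  rwa [hf.map_zero, zero_sub, abs_neg, abs_of_nonneg hs.1] at h

lemma continuousOn (hf : IsGeodesicFrom ρ a f) : ContinuousOn f (Icc 0 a) :=
  (LipschitzOnWith.of_dist_le_mul (K := 1) fun s hs t ht => by
    rw [hf.dist_eq s hs t ht, NNReal.coe_one, one_mul, Real.dist_eq]).continuousOn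

lemma injOn (hf : IsGeodesicFrom ρ a f) : InjOn f (Icc 0 a) := fun s hs t ht hst => by
  have h := hf.dist_eq s hs t ht
  rwa [hst, dist_self, eq_comm, abs_eq_zero, sub_eq_zero] at h

lemma meetTime_mem (hf : IsGeodesicFrom ρ a f) (hg : IsGeodesicFrom ρ a g) (ha : 0 ≤ a) :
    meetTime a f g ∈ {t ∈ Icc 0 a | f t = g t} :=
  isClosed_Icc.isClosed_eq hf.continuousOn hg.continuousOn |>.csSup_mem
    ⟨0, ⟨le_rfl, ha⟩, hf.map_zero.trans hg.map_zero.symm⟩ ⟨a, fun _ ht => ht.1.2⟩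

end IsGeodesicFrom

namespace IsRealTree

variable {seg : T → T → Set T} {ρ : T} {a : ℝ} {f g : ℝ → T}

lemma exists_isGeodesicFrom (htree : IsRealTree seg) {x : T} (hx : dist ρ x = a) :
    ∃ f, IsGeodesicFrom ρ a f ∧ f a = x := by
  obtain ⟨f, h0, h1, hiso, -⟩ := htree.geodesic ρ x
  rw [hx] at h1 hiso
  exact ⟨f, ⟨h0, hiso⟩, h1⟩

lemma image_Icc_eq_seg (htree : IsRealTree seg) {q : ℝ → T} {s t : ℝ} (hst : s < t)
    (hq : ContinuousOn q (Icc s t)) (hinj : InjOn q (Icc s t)) :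
    q '' Icc s t = seg (q s) (q t) := by
  have hlen : 0 < t - s := sub_pos.2 hst
  set φ : ℝ → ℝ := fun u => (t - s) * u + s
  have hφ : φ '' Icc 0 1 = Icc s t := by simp [φ, image_affine_Icc' hlen]
  have hmaps : MapsTo φ (Icc 0 1) (Icc s t) := hφ ▸ mapsTo_image φ _
  have hφinj : φ.Injective := fun u v huv => mul_left_cancel₀ hlen.ne' (add_right_cancel huv)
  rw [← hφ, image_image]
  exact htree.unique_arc _ _ (q ∘ φ) (hq.comp (by fun_prop) hmaps)
    (hinj.comp hφinj.injOn hmaps) (by simp [φ]) (by simp [φ])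

lemma dist_add_dist_of_mem_seg (htree : IsRealTree seg) {x y p : T} (hp : p ∈ seg x y) :
    dist x p + dist p y = dist x y := by
  obtain ⟨F, hF0, hF1, hiso, hseg⟩ := htree.geodesic x y
  rw [hseg] at hp
  obtain ⟨t, ht, rfl⟩ := hp
  have h0 := hiso 0 ⟨le_rfl, dist_nonneg⟩ t ht
  have h1 := hiso t ht _ ⟨dist_nonneg, le_rfl⟩
  rw [hF0] at h0
  rw [hF1] at h1
  rw [h0, h1, abs_of_nonpos (by linarith [ht.1]), abs_of_nonpos (by linarith [ht.2])]
  ring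

lemma eqOn_of_apply_eq (htree : IsRealTree seg) (hf : IsGeodesicFrom ρ a f)
    (hg : IsGeodesicFrom ρ a g) {s : ℝ} (hs : s ∈ Icc 0 a) (hfg : f s = g s) :
    EqOn f g (Icc 0 s) := by
  rcases hs.1.eq_or_lt with rfl | hs0
  · intro t ht
    rw [Icc_self, mem_singleton_iff] at ht
    rw [ht, hf.map_zero, hg.map_zero]
  have hsub : Icc 0 s ⊆ Icc 0 a := Icc_subset_Icc_right hs.2
  have himage : f '' Icc 0 s = g '' Icc 0 s := by
    rw [htree.image_Icc_eq_seg hs0 (hf.continuousOn.mono hsub) (hf.injOn.mono hsub),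
      htree.image_Icc_eq_seg hs0 (hg.continuousOn.mono hsub) (hg.injOn.mono hsub),
      hf.map_zero, hg.map_zero, hfg]
  intro t ht
  obtain ⟨u, hu, hgu⟩ : f t ∈ g '' Icc 0 s := himage ▸ mem_image_of_mem f ht
  have hut : u = t := by rw [← hg.dist_root (hsub hu), hgu, hf.dist_root (hsub ht)]
  rw [← hgu, hut]

lemma apply_meetTime_mem_seg (htree : IsRealTree seg) (hf : IsGeodesicFrom ρ a f)
    (hg : IsGeodesicFrom ρ a g) (ha : 0 ≤ a) (hlt : meetTime a f g < a) :
    f (meetTime a f g) ∈ seg (f a) (g a) := by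
  obtain ⟨hb, hfgb⟩ := hf.meetTime_mem hg ha
  set b := meetTime a f g
  set q : ℝ → T := fun u => if u ≤ b then f (2 * b - u) else g u
  have hreflect : MapsTo (fun u => 2 * b - u) (Icc (2 * b - a) b) (Icc 0 a) :=
    fun u hu => ⟨by linarith [hu.2, hb.1], by linarith [hu.1]⟩
  have hq_left : EqOn (fun u => f (2 * b - u)) q (Icc (2 * b - a) b) :=
    fun u hu => (if_pos hu.2).symm
  have hq_turn : q b = f b := by simp [q, two_mul]
  have hq_right : EqOn g q (Icc b a) := fun u hu => by
    rcases hu.1.eq_or_lt with rfl | hbu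
    · rw [hq_turn, hfgb]
    · exact (if_neg (not_le.2 hbu)).symm
  have hcont : ContinuousOn q (Icc (2 * b - a) a) := by
    rw [← Icc_union_Icc_eq_Icc (by linarith) hlt.le]
    exact ((hf.continuousOn.comp (by fun_prop) hreflect).congr hq_left.symm).union_of_isClosed
      ((hg.continuousOn.mono (Icc_subset_Icc_left hb.1)).congr hq_right.symm)
      isClosed_Icc isClosed_Icc
  have hinj : InjOn q (Icc (2 * b - a) a) := by
    rw [← Icc_union_Ioc_eq_Icc (by linarith) hlt.le,
      injOn_union ((Iic_disjoint_Ioc le_rfl).mono_left Icc_subset_Iic_self)]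
    refine ⟨(hf.injOn.comp sub_right_injective.injOn hreflect).congr hq_left,
      (hg.injOn.mono (Ioc_subset_Icc_self.trans (Icc_subset_Icc_left hb.1))).congr
        (hq_right.mono Ioc_subset_Icc_self), fun u hu v hv hquv => ?_⟩
    rw [← hq_left hu, ← hq_right (Ioc_subset_Icc_self hv)] at hquv
    beta_reduce at hquv
    -- a common point of the two branches has the same height `v > b` on both,
    -- so `f v = g v` would contradict the maximality of `b`
    have hv' : v ∈ Icc 0 a := ⟨by linarith [hv.1, hb.1], hv.2⟩
    have hvu : 2 * b - u = v := by
      rw [← hf.dist_root (s := 2 * b - u) (hreflect hu), hquv, hg.dist_root hv']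
    exact (le_meetTime hv' (hvu ▸ hquv)).not_gt hv.1
  have hseg := htree.image_Icc_eq_seg (by linarith) hcont hinj
  have hq_start : q (2 * b - a) = f a :=
    (hq_left ⟨le_rfl, by linarith⟩).symm.trans (congrArg f (sub_sub_cancel _ _))
  rw [hq_start, ← hq_right ⟨hlt.le, le_rfl⟩] at hseg
  exact hseg ▸ ⟨b, ⟨by linarith, hlt.le⟩, hq_turn⟩

lemma dist_eq_two_mul_sub_meetTime (htree : IsRealTree seg) (hf : IsGeodesicFrom ρ a f)
    (hg : IsGeodesicFrom ρ a g) (ha : 0 ≤ a) :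
    dist (f a) (g a) = 2 * (a - meetTime a f g) := by
  obtain ⟨hb, hfgb⟩ := hf.meetTime_mem hg ha
  rcases hb.2.eq_or_lt with hba | hba
  · rw [hba] at hfgb
    rw [hfgb, dist_self, hba, sub_self, mul_zero]
  have hsplit := htree.dist_add_dist_of_mem_seg (htree.apply_meetTime_mem_seg hf hg ha hba)
  rw [hf.dist_eq a ⟨ha, le_rfl⟩ _ hb, hfgb, hg.dist_eq _ hb a ⟨ha, le_rfl⟩,
    abs_of_nonneg (by linarith), abs_of_nonpos (by linarith)] at hsplit
  linarith

lemma dist_le_max_of_dist_root_eq (htree : IsRealTree seg) {x y z : T} (hx : dist ρ x = a)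
    (hy : dist ρ y = a) (hz : dist ρ z = a) : dist x z ≤ max (dist x y) (dist y z) := by
  have ha : 0 ≤ a := hx ▸ dist_nonneg
  obtain ⟨f, hf, rfl⟩ := htree.exists_isGeodesicFrom hx
  obtain ⟨g, hg, rfl⟩ := htree.exists_isGeodesicFrom hy
  obtain ⟨h, hh, rfl⟩ := htree.exists_isGeodesicFrom hz
  obtain ⟨hb₁, hfg⟩ := hf.meetTime_mem hg ha
  obtain ⟨hb₂, hgh⟩ := hg.meetTime_mem hh ha
  set m := min (meetTime a f g) (meetTime a g h) with hm_def
  have hm : m ∈ Icc 0 a := ⟨le_min hb₁.1 hb₂.1, (min_le_left _ _).trans hb₁.2⟩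
  have hfh : f m = h m :=
    (htree.eqOn_of_apply_eq hf hg hb₁ hfg ⟨hm.1, min_le_left _ _⟩).trans
      (htree.eqOn_of_apply_eq hg hh hb₂ hgh ⟨hm.1, min_le_right _ _⟩)
  have hmeet := le_meetTime hm hfh
  rw [htree.dist_eq_two_mul_sub_meetTime hf hh ha, htree.dist_eq_two_mul_sub_meetTime hf hg ha,
    htree.dist_eq_two_mul_sub_meetTime hg hh ha]
  rcases le_total (meetTime a f g) (meetTime a g h) with h₁₂ | h₂₁
  · exact le_max_of_le_left (by linarith [min_eq_left h₁₂])
  · exact le_max_of_le_right (by linarith [min_eq_right h₂₁])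

theorem isUltrametricDist_level (htree : IsRealTree seg) (ρ : T) (a : ℝ) :
    IsUltrametricDist {τ : T // dist ρ τ = a} :=
  ⟨fun x y z => htree.dist_le_max_of_dist_root_eq x.2 y.2 z.2⟩

end IsRealTree

end

theorem stmt2_general {T : Type*} [MetricSpace T]
    (seg : T → T → Set T) (htree : IsRealTree seg) (ρ : T)
    (a r : ℝ)
    (σ σ' : T) (hσ : dist ρ σ = a) (hσ' : dist ρ σ' = a) :
    Metric.ball σ r ∩ {τ : T | dist ρ τ = a}
        = Metric.ball σ' r ∩ {τ : T | dist ρ τ = a}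
    ∨ (Metric.ball σ r ∩ {τ : T | dist ρ τ = a})
        ∩ (Metric.ball σ' r ∩ {τ : T | dist ρ τ = a}) = ∅ := by
  have := htree.isUltrametricDist_level ρ a
  have hball : ∀ τ : {τ : T // dist ρ τ = a},
      Metric.ball τ.1 r ∩ {τ : T | dist ρ τ = a} = Subtype.val '' Metric.ball τ r :=
    fun τ => by rw [inter_comm]; exact (Subtype.image_preimage_coe _ _).symm
  rw [hball ⟨σ, hσ⟩, hball ⟨σ', hσ'⟩, ← disjoint_iff_inter_eq_empty,
    disjoint_image_iff Subtype.val_injective]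
  exact (IsUltrametricDist.ball_eq_or_disjoint _ _ _).imp (congrArg _) id

/-- In a compact rooted real tree, for `a ≥ r/2 > 0`, any two balls of
radius `r` in the level set `T(a)`, i.e. sets `Γ(σ,r) = B(σ,r) ∩ T(a)` with
`σ ∈ T(a)`, are either equal or disjoint. -/
theorem stmt2 {T : Type*} [MetricSpace T] [CompactSpace T]
    (seg : T → T → Set T) (htree : IsRealTree seg) (ρ : T)
    (a r : ℝ) (ha : 0 < a) (hr : 0 < r) (har : r / 2 ≤ a)
    (σ σ' : T) (hσ : dist ρ σ = a) (hσ' : dist ρ σ' = a) :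
    Metric.ball σ r ∩ {τ : T | dist ρ τ = a}
        = Metric.ball σ' r ∩ {τ : T | dist ρ τ = a}
    ∨ (Metric.ball σ r ∩ {τ : T | dist ρ τ = a})
        ∩ (Metric.ball σ' r ∩ {τ : T | dist ρ τ = a}) = ∅ :=
  stmt2_general seg htree ρ a r σ σ' hσ hσ'
end

section
/- Lower comparison lemma on level sets of real trees: Let (T,d,ρ) be a compact rooted real tree, a ∈ (0,∞) with T(a) nonempty, g an increasing continuous gauge with g(0)=0, μ a finite Borel measure on T with μ(T∖T(a))=0, A ⊂ T(a) Borel, and c ∈ (0,∞). If for every σ ∈ A one has limsup_{r→0} μ(B(σ,r))/g(r) > c, then μ(A) ≥ c·H_g(A), with no multiplicative correction constant. -/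
open MeasureTheory Filter
open scoped ENNReal

open Set Topology

section RealTree

variable {T : Type*} [MetricSpace T]

structure IsGeodesicSegment (f : ℝ → T) (x y : T) : Prop where
  apply_zero : f 0 = x
  apply_dist : f (dist x y) = y
  dist_apply_apply : ∀ s ∈ Icc 0 (dist x y), ∀ t ∈ Icc 0 (dist x y), dist (f s) (f t) = |s - t|

namespace IsGeodesicSegment

variable {f : ℝ → T} {x y : T} {s : ℝ}

theorem continuousOn (hf : IsGeodesicSegment f x y) : ContinuousOn f (Icc 0 (dist x y)) :=
  (LipschitzOnWith.of_dist_le_mul (K := 1) fun s hs t ht => by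
    simp [hf.dist_apply_apply s hs t ht, Real.dist_eq]).continuousOn

theorem injOn (hf : IsGeodesicSegment f x y) : InjOn f (Icc 0 (dist x y)) := fun s hs t ht hst => by
  have := hf.dist_apply_apply s hs t ht
  rw [hst, dist_self, eq_comm, abs_eq_zero, sub_eq_zero] at this
  exact this

theorem dist_left (hf : IsGeodesicSegment f x y) (hs : s ∈ Icc 0 (dist x y)) :
    dist x (f s) = s := by
  rw [← hf.apply_zero, hf.dist_apply_apply 0 ⟨le_rfl, dist_nonneg⟩ s hs, zero_sub, abs_neg,
    abs_of_nonneg hs.1]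

theorem dist_right (hf : IsGeodesicSegment f x y) (hs : s ∈ Icc 0 (dist x y)) :
    dist (f s) y = dist x y - s := by
  conv_lhs => rw [← hf.apply_dist]
  rw [hf.dist_apply_apply s hs _ ⟨dist_nonneg, le_rfl⟩, abs_sub_comm,
    abs_of_nonneg (by linarith [hs.2])]

theorem exists_arc_of_last_common_point {ρ x y : T} {f g : ℝ → T}
    (hf : IsGeodesicSegment f ρ x) (hg : IsGeodesicSegment g ρ y) {t : ℝ}
    (ht : t ∈ Icc 0 (min (dist ρ x) (dist ρ y))) (hft : f t = g t)
    (hlast : ∀ r ∈ Ioc t (min (dist ρ x) (dist ρ y)), f r ≠ g r) :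
    ∃ q : ℝ → T, ContinuousOn q (Icc 0 (dist ρ x + dist ρ y - 2 * t)) ∧
      InjOn q (Icc 0 (dist ρ x + dist ρ y - 2 * t)) ∧ q 0 = x ∧ q (dist ρ x - t) = f t ∧
      q (dist ρ x + dist ρ y - 2 * t) = y := by
  set dx := dist ρ x
  set m := dx - t
  set L := dx + dist ρ y - 2 * t
  have hmL : m ≤ L := by linarith [ht.2.trans (min_le_right _ _)]
  let q : ℝ → T := fun s => if s ≤ m then f (dx - s) else g (s - m + t)
  have hf_mem : ∀ s ∈ Icc 0 m, dx - s ∈ Icc 0 dx := fun s hs =>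
    ⟨by linarith [hs.2, ht.1], by linarith [hs.1]⟩
  have hg_mem : ∀ s ∈ Icc m L, s - m + t ∈ Icc 0 (dist ρ y) := fun s hs =>
    ⟨by linarith [hs.1, ht.1], by linarith [hs.2]⟩
  have hq_f : ∀ s ∈ Icc 0 m, q s = f (dx - s) := fun s hs => if_pos hs.2
  have hq_g : ∀ s ∈ Icc m L, q s = g (s - m + t) := by
    intro s hs
    by_cases hsm : s ≤ m
    · obtain rfl : s = m := le_antisymm hsm hs.1
      simp only [q, if_pos hsm, sub_self, zero_add, m, sub_sub_cancel, hft]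
    · exact if_neg hsm
  have hmixed : ∀ s ∈ Icc 0 m, ∀ s' ∈ Icc m L, q s = q s' → s = s' := by
    intro s hs s' hs' hss'
    rw [hq_f s hs, hq_g s' hs'] at hss'
    have hr : dx - s = s' - m + t := by
      rw [← hf.dist_left (hf_mem s hs), ← hg.dist_left (hg_mem s' hs'), hss']
    by_contra hne
    refine hlast (dx - s) ⟨?_, le_min (hf_mem s hs).2 (hr ▸ (hg_mem s' hs').2)⟩ (hr ▸ hss')
    by_contra! hle
    exact hne (by linarith [hs.2, hs'.1])
  refine ⟨q, ?_, ?_, ?_, ?_, ?_⟩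
  · rw [← Icc_union_Icc_eq_Icc (by linarith [ht.2.trans (min_le_left _ _)]) hmL]
    refine ContinuousOn.union_of_isClosed ?_ ?_ isClosed_Icc isClosed_Icc
    · exact (hf.continuousOn.comp (continuousOn_const.sub continuousOn_id) hf_mem).congr hq_f
    · exact (hg.continuousOn.comp ((continuousOn_id.sub continuousOn_const).add
        continuousOn_const) hg_mem).congr hq_g
  · intro s hs s' hs' hss'
    rcases le_total s m with hsm | hsm <;> rcases le_total s' m with hs'm | hs'm
    · rw [hq_f s ⟨hs.1, hsm⟩, hq_f s' ⟨hs'.1, hs'm⟩] at hss'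
      linarith [hf.injOn (hf_mem s ⟨hs.1, hsm⟩) (hf_mem s' ⟨hs'.1, hs'm⟩) hss']
    · exact hmixed s ⟨hs.1, hsm⟩ s' ⟨hs'm, hs'.2⟩ hss'
    · exact (hmixed s' ⟨hs'.1, hs'm⟩ s ⟨hsm, hs.2⟩ hss'.symm).symm
    · rw [hq_g s ⟨hsm, hs.2⟩, hq_g s' ⟨hs'm, hs'.2⟩] at hss'
      linarith [hg.injOn (hg_mem s ⟨hsm, hs.2⟩) (hg_mem s' ⟨hs'm, hs'.2⟩) hss']
  · rw [hq_f 0 ⟨le_rfl, by linarith [ht.2.trans (min_le_left _ _)]⟩, sub_zero, hf.apply_dist]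
  · rw [hq_f m ⟨by linarith [ht.2.trans (min_le_left _ _)], le_rfl⟩, sub_sub_cancel]
  · rw [hq_g L ⟨hmL, le_rfl⟩, show L - m + t = dist ρ y by ring, hg.apply_dist]

end IsGeodesicSegment

namespace IsRealTree

variable {seg : T → T → Set T}

theorem exists_isGeodesicSegment (htree : IsRealTree seg) (x y : T) :
    ∃ f, IsGeodesicSegment f x y ∧ seg x y = f '' Icc 0 (dist x y) :=
  let ⟨f, h0, h1, hf, hseg⟩ := htree.geodesic x y
  ⟨f, ⟨h0, h1, hf⟩, hseg⟩

theorem dist_add_dist_of_arc (htree : IsRealTree seg) {q : ℝ → T} {L s : ℝ} (hL : 0 ≤ L)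
    (hq : ContinuousOn q (Icc 0 L)) (hinj : InjOn q (Icc 0 L)) (hs : s ∈ Icc 0 L) :
    dist (q 0) (q s) + dist (q s) (q L) = dist (q 0) (q L) := by
  rcases hL.eq_or_lt with rfl | hL
  · obtain rfl : s = 0 := le_antisymm hs.2 hs.1
    simp
  have hmaps : MapsTo (L * ·) (Icc 0 1) (Icc 0 L) := fun u hu =>
    ⟨mul_nonneg hL.le hu.1, mul_le_of_le_one_right hL.le hu.2⟩
  have harc : (fun u => q (L * u)) '' Icc 0 1 = seg (q 0) (q L) :=
    htree.unique_arc _ _ _ (hq.comp (continuousOn_const.mul continuousOn_id) hmaps)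
      (fun u hu v hv huv => mul_left_cancel₀ hL.ne' (hinj (hmaps hu) (hmaps hv) huv))
      (by simp) (by simp)
  obtain ⟨h, hh, hseg⟩ := htree.exists_isGeodesicSegment (q 0) (q L)
  have hmem : q s ∈ h '' Icc 0 (dist (q 0) (q L)) := by
    rw [← hseg, ← harc]
    exact ⟨s / L, ⟨div_nonneg hs.1 hL.le, div_le_one_of_le₀ hs.2 hL.le⟩,
      by simp only [mul_div_cancel₀ _ hL.ne']⟩
  obtain ⟨τ, hτ, hτs⟩ := hmem
  rw [← hτs, hh.dist_left hτ, hh.dist_right hτ]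
  ring

theorem dist_eq_of_last_common_point (htree : IsRealTree seg) {ρ x y : T} {f g : ℝ → T}
    (hf : IsGeodesicSegment f ρ x) (hg : IsGeodesicSegment g ρ y) {t : ℝ}
    (ht : t ∈ Icc 0 (min (dist ρ x) (dist ρ y))) (hft : f t = g t)
    (hlast : ∀ r ∈ Ioc t (min (dist ρ x) (dist ρ y)), f r ≠ g r) :
    dist x y = dist ρ x + dist ρ y - 2 * t := by
  have htx : t ≤ dist ρ x := ht.2.trans (min_le_left _ _)
  have hty : t ≤ dist ρ y := ht.2.trans (min_le_right _ _)
  obtain ⟨q, hcont, hinj, hq0, hqm, hqL⟩ := hf.exists_arc_of_last_common_point hg ht hft hlast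
  have hsplit := htree.dist_add_dist_of_arc (s := dist ρ x - t) (by linarith) hcont hinj
    ⟨by linarith, by linarith⟩
  rw [hq0, hqm, hqL, dist_comm, hf.dist_right ⟨ht.1, htx⟩, hft,
    hg.dist_right ⟨ht.1, hty⟩] at hsplit
  linarith

theorem exists_branch_point (htree : IsRealTree seg) {ρ x y : T} {f g : ℝ → T}
    (hf : IsGeodesicSegment f ρ x) (hg : IsGeodesicSegment g ρ y) :
    ∃ t ∈ Icc 0 (min (dist ρ x) (dist ρ y)),
      f t = g t ∧ dist x y = dist ρ x + dist ρ y - 2 * t := by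
  set I := Icc 0 (min (dist ρ x) (dist ρ y))
  set E := I ∩ {t | f t = g t}
  have hfg : ContinuousOn (fun t => (f t, g t)) I :=
    (hf.continuousOn.mono (Icc_subset_Icc_right (min_le_left _ _))).prodMk
      (hg.continuousOn.mono (Icc_subset_Icc_right (min_le_right _ _)))
  have hE : IsCompact E := isCompact_Icc.of_isClosed_subset
    (hfg.preimage_isClosed_of_isClosed isClosed_Icc isClosed_diagonal) inter_subset_left
  have h0 : (0 : ℝ) ∈ E :=
    ⟨⟨le_rfl, le_min dist_nonneg dist_nonneg⟩, hf.apply_zero.trans hg.apply_zero.symm⟩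
  have htE : sSup E ∈ E := hE.sSup_mem ⟨0, h0⟩
  refine ⟨sSup E, htE.1, htE.2, htree.dist_eq_of_last_common_point hf hg htE.1 htE.2 ?_⟩
  intro r hr hfr
  have hrE : r ∈ E := ⟨Ioc_subset_Icc_self (Ioc_subset_Ioc_left htE.1.1 hr), hfr⟩
  exact (le_csSup hE.bddAbove hrE).not_gt hr.1

end IsRealTree

end RealTree

def IsUltrametricOn {X : Type*} [Dist X] (S : Set X) : Prop :=
  ∀ x ∈ S, ∀ y ∈ S, ∀ z ∈ S, dist x y ≤ max (dist x z) (dist z y)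

theorem IsRealTree.isUltrametricOn_levelSet {T : Type*} [MetricSpace T] {seg : T → T → Set T}
    (htree : IsRealTree seg) (ρ : T) (a : ℝ) : IsUltrametricOn {τ : T | dist ρ τ = a} := by
  intro x (hx : dist ρ x = a) y (hy : dist ρ y = a) z (hz : dist ρ z = a)
  obtain ⟨fx, hfx, -⟩ := htree.exists_isGeodesicSegment ρ x
  obtain ⟨fy, hfy, -⟩ := htree.exists_isGeodesicSegment ρ y
  obtain ⟨fz, hfz, -⟩ := htree.exists_isGeodesicSegment ρ z
  obtain ⟨s, hs, hfxz, hxz⟩ := htree.exists_branch_point hfx hfz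
  obtain ⟨t, ht, hfzy, hzy⟩ := htree.exists_branch_point hfz hfy
  simp only [hx, hy, hz, min_self] at hs ht hxz hzy
  have hs' : s ∈ Icc 0 (dist ρ z) := hz ▸ hs
  have ht' : t ∈ Icc 0 (dist ρ z) := hz ▸ ht
  calc dist x y ≤ dist x (fx s) + dist (fz s) (fz t) + dist (fy t) y := by
        rw [hfxz, hfzy]; exact dist_triangle4 _ _ _ _
    _ = (a - s) + |s - t| + (a - t) := by
        rw [dist_comm, hfx.dist_right (hx ▸ hs), hfz.dist_apply_apply s hs' t ht',
          hfy.dist_right (hy ▸ ht), hx, hy]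
    _ = max (dist x z) (dist z y) := by
        rw [hxz, hzy]
        rcases le_total s t with h | h
        · rw [abs_of_nonpos (by linarith), max_eq_left (by linarith)]; ring
        · rw [abs_of_nonneg (by linarith), max_eq_right (by linarith)]; ring

section Laminar

variable {α : Type*}

def IsLaminar (𝓑 : Set (Set α)) : Prop :=
  ∀ B₁ ∈ 𝓑, ∀ B₂ ∈ 𝓑, (B₁ ∩ B₂).Nonempty → B₁ ⊆ B₂ ∨ B₂ ⊆ B₁

def unionThrough (𝓑 : Set (Set α)) (x : α) : Set α :=
  ⋃₀ {B ∈ 𝓑 | x ∈ B}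

variable {𝓑 𝓐 : Set (Set α)} {B : Set α} {x y : α}

theorem subset_unionThrough (hB : B ∈ 𝓑) (hx : x ∈ B) : B ⊆ unionThrough 𝓑 x :=
  subset_sUnion_of_mem ⟨hB, hx⟩

namespace IsLaminar

theorem mono (h : IsLaminar 𝓑) (h𝓐 : 𝓐 ⊆ 𝓑) : IsLaminar 𝓐 :=
  fun B₁ hB₁ B₂ hB₂ => h B₁ (h𝓐 hB₁) B₂ (h𝓐 hB₂)

theorem unionThrough_subset (h : IsLaminar 𝓑) (hB : B ∈ 𝓑) (hx : x ∈ B) (hy : y ∈ B) :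
    unionThrough 𝓑 x ⊆ unionThrough 𝓑 y := by
  rintro z ⟨B', ⟨hB', hxB'⟩, hzB'⟩
  rcases h B' hB' B hB ⟨x, hxB', hx⟩ with hsub | hsub
  · exact subset_unionThrough hB hy (hsub hzB')
  · exact subset_unionThrough hB' (hsub hy) hzB'

theorem unionThrough_eq (h : IsLaminar 𝓑) (hy : y ∈ unionThrough 𝓑 x) :
    unionThrough 𝓑 y = unionThrough 𝓑 x := by
  obtain ⟨B, ⟨hB, hxB⟩, hyB⟩ := hy
  exact (h.unionThrough_subset hB hyB hxB).antisymm (h.unionThrough_subset hB hxB hyB)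

theorem pairwise_disjoint_image_unionThrough (h : IsLaminar 𝓑) (A : Set α) :
    (unionThrough 𝓑 '' A).Pairwise Disjoint := by
  rintro _ ⟨x, -, rfl⟩ _ ⟨y, -, rfl⟩ hne
  refine disjoint_left.2 fun z hzx hzy => hne ?_
  rw [← h.unionThrough_eq hzx, h.unionThrough_eq hzy]

theorem ediam_unionThrough_le {X : Type*} [PseudoEMetricSpace X] {𝓑 : Set (Set X)} {x : X}
    (h : IsLaminar 𝓑) :
    Metric.ediam (unionThrough 𝓑 x) ≤ ⨆ B ∈ {B ∈ 𝓑 | x ∈ B}, Metric.ediam B := by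
  refine Metric.ediam_le ?_
  rintro y ⟨B₁, hB₁, hyB₁⟩ z ⟨B₂, hB₂, hzB₂⟩
  rcases h B₁ hB₁.1 B₂ hB₂.1 ⟨x, hB₁.2, hB₂.2⟩ with hsub | hsub
  · exact (Metric.edist_le_ediam_of_mem (hsub hyB₁) hzB₂).trans (le_biSup _ hB₂)
  · exact (Metric.edist_le_ediam_of_mem hyB₁ (hsub hzB₂)).trans (le_biSup _ hB₁)

theorem mul_le_measure_unionThrough {X : Type*} [PseudoEMetricSpace X] [MeasurableSpace X]
    {μ : Measure X} {𝓑 : Set (Set X)} {x : X} (h : IsLaminar 𝓑) {g : ℝ≥0∞ → ℝ≥0∞}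
    (hgmono : Monotone g) (hgcont : Continuous g) {c : ℝ≥0∞}
    (hmass : ∀ B ∈ 𝓑, c * g (Metric.ediam B) ≤ μ B) (hx : ∃ B ∈ 𝓑, x ∈ B) :
    c * g (Metric.ediam (unionThrough 𝓑 x)) ≤ μ (unionThrough 𝓑 x) := by
  obtain ⟨B₀, hB₀, hxB₀⟩ := hx
  calc c * g (Metric.ediam (unionThrough 𝓑 x))
      ≤ c * g (⨆ B ∈ {B ∈ 𝓑 | x ∈ B}, Metric.ediam B) := by
        gcongr; exact hgmono h.ediam_unionThrough_le
    _ = ⨆ B ∈ {B ∈ 𝓑 | x ∈ B}, c * g (Metric.ediam B) := by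
        rw [← sSup_image, hgmono.map_csSup_of_continuousAt (A := Metric.ediam '' {B ∈ 𝓑 | x ∈ B})
          hgcont.continuousAt ⟨_, mem_image_of_mem _ ⟨hB₀, hxB₀⟩⟩, ← image_comp,
          sSup_image]
        simp only [ENNReal.mul_iSup, Function.comp_apply]
    _ ≤ μ (unionThrough 𝓑 x) :=
        iSup₂_le fun B hB => (hmass B hB.1).trans (measure_mono (subset_unionThrough hB.1 hB.2))

end IsLaminar

end Laminar

namespace IsUltrametricOn

open Metric

variable {X : Type*} [PseudoMetricSpace X] {S : Set X} {σ τ : X} {r : ℝ}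

theorem ball_inter_subset (hS : IsUltrametricOn S) (hσ : σ ∈ S) (hτ : τ ∈ S)
    (h : dist σ τ < r) : ball σ r ∩ S ⊆ ball τ r ∩ S :=
  fun x ⟨hx, hxS⟩ => ⟨(hS x hxS τ hτ σ hσ).trans_lt (max_lt hx h), hxS⟩

theorem ball_inter_eq (hS : IsUltrametricOn S) (hσ : σ ∈ S) (hτ : τ ∈ S)
    (h : dist σ τ < r) : ball σ r ∩ S = ball τ r ∩ S :=
  (hS.ball_inter_subset hσ hτ h).antisymm
    (hS.ball_inter_subset hτ hσ ((dist_comm τ σ).trans_lt h))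

theorem ediam_ball_inter_le (hS : IsUltrametricOn S) (hσ : σ ∈ S) (r : ℝ) :
    ediam (ball σ r ∩ S) ≤ ENNReal.ofReal r := by
  refine ediam_le fun x ⟨hx, hxS⟩ y ⟨hy, hyS⟩ => ?_
  rw [edist_dist]
  exact ENNReal.ofReal_le_ofReal
    ((hS x hxS y hyS σ hσ).trans (max_le (le_of_lt hx) ((dist_comm σ y).trans_le (le_of_lt hy))))

theorem isLaminar_ball_inter (hS : IsUltrametricOn S) :
    IsLaminar {B | ∃ σ ∈ S, ∃ r, B = ball σ r ∩ S} := by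
  rintro _ ⟨σ, hσ, r, rfl⟩ _ ⟨τ, hτ, s, rfl⟩ ⟨x, ⟨hxσ, hxS⟩, hxτ, -⟩
  rw [hS.ball_inter_eq hσ hxS ((dist_comm σ x).trans_lt hxσ),
    hS.ball_inter_eq hτ hxS ((dist_comm τ x).trans_lt hxτ)]
  rcases le_total r s with hrs | hrs
  · exact Or.inl (inter_subset_inter_left _ (ball_subset_ball hrs))
  · exact Or.inr (inter_subset_inter_left _ (ball_subset_ball hrs))

end IsUltrametricOn

theorem Set.Pairwise.countable_of_isOpen_preimage_val {X : Type*} [TopologicalSpace X]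
    [SecondCountableTopology X] {S : Set X} {𝒞 : Set (Set X)} (hd : 𝒞.Pairwise Disjoint)
    (hopen : ∀ C ∈ 𝒞, IsOpen ((↑) ⁻¹' C : Set S)) (hne : ∀ C ∈ 𝒞, (S ∩ C).Nonempty) :
    𝒞.Countable := by
  refine Set.PairwiseDisjoint.countable_of_isOpen (s := fun C => (Subtype.val ⁻¹' C : Set S))
    (fun _ hC _ hC' hne' => (hd hC hC' hne').preimage _) hopen fun C hC => ?_
  obtain ⟨x, hxS, hxC⟩ := hne C hC
  exact ⟨⟨x, hxS⟩, hxC⟩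

theorem MeasurableSet.of_isOpen_preimage_val {X : Type*} [TopologicalSpace X] [MeasurableSpace X]
    [OpensMeasurableSpace X] {S C : Set X} (hS : MeasurableSet S) (hCS : C ⊆ S)
    (hC : IsOpen ((↑) ⁻¹' C : Set S)) : MeasurableSet C := by
  simpa [Subtype.image_preimage_coe, inter_eq_right.2 hCS] using hS.subtype_image hC.measurableSet

theorem IsLaminar.exists_disjoint_cover {X : Type*} [PseudoEMetricSpace X]
    [SecondCountableTopology X] [MeasurableSpace X] [OpensMeasurableSpace X] {μ : Measure X}
    {𝓑 : Set (Set X)} {S A U : Set X} (h : IsLaminar 𝓑) (hSm : MeasurableSet S)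
    (hsub : ∀ B ∈ 𝓑, B ⊆ U ∩ S) (hopen : ∀ B ∈ 𝓑, IsOpen ((↑) ⁻¹' B : Set S)) {δ : ℝ≥0∞}
    (hdiam : ∀ B ∈ 𝓑, Metric.ediam B ≤ δ) {g : ℝ≥0∞ → ℝ≥0∞} (hgmono : Monotone g)
    (hgcont : Continuous g) {c : ℝ≥0∞} (hmass : ∀ B ∈ 𝓑, c * g (Metric.ediam B) ≤ μ B)
    (hA : ∀ x ∈ A, ∃ B ∈ 𝓑, x ∈ B) :
    ∃ 𝒞 : Set (Set X), 𝒞.Countable ∧ 𝒞.Pairwise Disjoint ∧ A ⊆ ⋃₀ 𝒞 ∧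
      ∀ C ∈ 𝒞, MeasurableSet C ∧ C ⊆ U ∧ Metric.ediam C ≤ δ ∧ c * g (Metric.ediam C) ≤ μ C := by
  have hmem : ∀ x ∈ A, x ∈ unionThrough 𝓑 x := fun x hx =>
    let ⟨B, hB, hxB⟩ := hA x hx
    subset_unionThrough hB hxB hxB
  have hblock_sub : ∀ x, unionThrough 𝓑 x ⊆ U ∩ S := fun x =>
    sUnion_subset fun B hB => hsub B hB.1
  have hblock_open : ∀ x, IsOpen ((↑) ⁻¹' unionThrough 𝓑 x : Set S) := fun x => by
    rw [unionThrough, preimage_sUnion]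
    exact isOpen_biUnion fun B hB => hopen B hB.1
  refine ⟨unionThrough 𝓑 '' A, ?_, h.pairwise_disjoint_image_unionThrough A,
    fun x hx => ⟨_, mem_image_of_mem _ hx, hmem x hx⟩, ?_⟩
  · refine (h.pairwise_disjoint_image_unionThrough A).countable_of_isOpen_preimage_val
      (S := S) ?_ ?_
    · rintro _ ⟨x, -, rfl⟩
      exact hblock_open x
    · rintro _ ⟨x, hx, rfl⟩
      exact ⟨x, (hblock_sub x (hmem x hx)).2, hmem x hx⟩
  · rintro _ ⟨x, hx, rfl⟩
    exact ⟨hSm.of_isOpen_preimage_val ((hblock_sub x).trans inter_subset_right) (hblock_open x),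
      (hblock_sub x).trans inter_subset_left,
      h.ediam_unionThrough_le.trans (iSup₂_le fun B hB => hdiam B hB.1),
      h.mul_le_measure_unionThrough hgmono hgcont hmass (hA x hx)⟩

theorem IsUltrametricOn.exists_disjoint_cover {X : Type*} [MetricSpace X]
    [SecondCountableTopology X] [MeasurableSpace X] [OpensMeasurableSpace X] {μ : Measure X}
    {S A U : Set X} (hS : IsUltrametricOn S) (hSm : MeasurableSet S) (hμS : μ Sᶜ = 0)
    (hAS : A ⊆ S) {g : ℝ≥0∞ → ℝ≥0∞} (hgmono : Monotone g) (hgcont : Continuous g) {c : ℝ≥0∞}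
    (hA : ∀ σ ∈ A, ∃ᶠ r in 𝓝[>] 0, c * g (ENNReal.ofReal r) ≤ μ (Metric.ball σ r))
    (hU : IsOpen U) (hAU : A ⊆ U) {δ : ℝ≥0∞} (hδ : 0 < δ) :
    ∃ 𝒞 : Set (Set X), 𝒞.Countable ∧ 𝒞.Pairwise Disjoint ∧ A ⊆ ⋃₀ 𝒞 ∧
      ∀ C ∈ 𝒞, MeasurableSet C ∧ C ⊆ U ∧ Metric.ediam C ≤ δ ∧ c * g (Metric.ediam C) ≤ μ C := by
  refine IsLaminar.exists_disjoint_cover (𝓑 := {B | ∃ σ ∈ S, ∃ r, ENNReal.ofReal r ≤ δ ∧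
      Metric.ball σ r ⊆ U ∧ c * g (ENNReal.ofReal r) ≤ μ (Metric.ball σ r) ∧
      B = Metric.ball σ r ∩ S})
    (hS.isLaminar_ball_inter.mono ?_) hSm ?_ ?_ ?_ hgmono hgcont ?_ ?_
  · rintro _ ⟨σ, hσ, r, -, -, -, rfl⟩
    exact ⟨σ, hσ, r, rfl⟩
  · rintro _ ⟨σ, -, r, -, hballU, -, rfl⟩
    exact inter_subset_inter_left _ hballU
  · rintro _ ⟨σ, -, r, -, -, -, rfl⟩
    rw [preimage_inter, Subtype.coe_preimage_self, inter_univ]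
    exact Metric.isOpen_ball.preimage continuous_subtype_val
  · rintro _ ⟨σ, hσ, r, hrδ, -, -, rfl⟩
    exact (hS.ediam_ball_inter_le hσ r).trans hrδ
  · rintro _ ⟨σ, hσ, r, -, -, hr, rfl⟩
    calc c * g (Metric.ediam (Metric.ball σ r ∩ S)) ≤ c * g (ENNReal.ofReal r) := by
          gcongr; exact hgmono (hS.ediam_ball_inter_le hσ r)
      _ ≤ μ (Metric.ball σ r ∩ S) := hr.trans_eq (measure_inter_conull hμS).symm
  · intro σ hσ
    obtain ⟨ε, hε, hballU⟩ := Metric.isOpen_iff.1 hU σ (hAU hσ)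
    have hsmall : ∀ᶠ r in 𝓝 (0 : ℝ), r < ε ∧ ENNReal.ofReal r < δ :=
      (eventually_lt_nhds hε).and
        ((ENNReal.continuous_ofReal.tendsto' 0 0 ENNReal.ofReal_zero).eventually
          (eventually_lt_nhds hδ))
    obtain ⟨r, hr, hr0, hrε, hrδ⟩ := ((hA σ hσ).and_eventually
      (eventually_mem_nhdsWithin.and (nhdsWithin_le_nhds hsmall))).exists
    exact ⟨_, ⟨σ, hAS hσ, r, hrδ.le, (Metric.ball_subset_ball hrε.le).trans hballU, hr, rfl⟩,
      Metric.mem_ball_self hr0, hAS hσ⟩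

theorem MeasureTheory.Measure.mul_mkMetric_le_of_forall_exists_cover {X : Type*} [EMetricSpace X]
    [MeasurableSpace X] [BorelSpace X] (μ : Measure X) [μ.OuterRegular] {g : ℝ≥0∞ → ℝ≥0∞}
    {c : ℝ≥0∞} {A : Set X}
    (h : ∀ U, IsOpen U → A ⊆ U → ∀ δ > 0, ∃ 𝒞 : Set (Set X), 𝒞.Countable ∧ 𝒞.Pairwise Disjoint ∧
      A ⊆ ⋃₀ 𝒞 ∧ ∀ C ∈ 𝒞, MeasurableSet C ∧ C ⊆ U ∧ Metric.ediam C ≤ δ ∧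
        c * g (Metric.ediam C) ≤ μ C) :
    c * Measure.mkMetric g A ≤ μ A := by
  rw [Set.measure_eq_iInf_isOpen A μ]
  refine le_iInf₂ fun U hAU => le_iInf fun hU => ?_
  rw [← OuterMeasure.coe_mkMetric, OuterMeasure.mkMetric, OuterMeasure.mkMetric',
    OuterMeasure.iSup_apply]
  simp only [OuterMeasure.iSup_apply, ENNReal.mul_iSup]
  refine iSup₂_le fun δ hδ => ?_
  obtain ⟨𝒞, hcount, hdisj, hcover, h𝒞⟩ := h U hU hAU δ hδ
  have := hcount.to_subtype
  calc c * OuterMeasure.mkMetric'.pre (fun s => g (Metric.ediam s)) δ A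
      ≤ c * ∑' C : 𝒞, g (Metric.ediam (C : Set X)) := by
        gcongr
        calc _ ≤ OuterMeasure.mkMetric'.pre (fun s => g (Metric.ediam s)) δ (⋃ C : 𝒞, C) :=
              measure_mono (sUnion_eq_iUnion ▸ hcover)
          _ ≤ _ := measure_iUnion_le (fun C : 𝒞 => (C : Set X))
          _ ≤ ∑' C : 𝒞, g (Metric.ediam (C : Set X)) := ENNReal.tsum_le_tsum fun C =>
              OuterMeasure.mkMetric'.pre_le (h𝒞 C C.2).2.2.1
    _ = ∑' C : 𝒞, c * g (Metric.ediam (C : Set X)) := ENNReal.tsum_mul_left.symm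
    _ ≤ ∑' C : 𝒞, μ C := ENNReal.tsum_le_tsum fun C => (h𝒞 C C.2).2.2.2
    _ = μ (⋃₀ 𝒞) := (measure_sUnion hcount hdisj fun C hC => (h𝒞 C hC).1).symm
    _ ≤ μ U := measure_mono (sUnion_subset fun C hC => (h𝒞 C hC).2.1)

theorem stmt7_general {T : Type*} [MetricSpace T] [CompactSpace T]
    [MeasurableSpace T] [BorelSpace T]
    (seg : T → T → Set T) (htree : IsRealTree seg) (ρ : T)
    (a : ℝ)
    (g : ℝ≥0∞ → ℝ≥0∞) (hgmono : Monotone g) (hgcont : Continuous g)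
    (μ : Measure T) [IsFiniteMeasure μ]
    (hcarried : μ {τ : T | dist ρ τ = a}ᶜ = 0)
    (A : Set T) (hAsub : A ⊆ {τ : T | dist ρ τ = a})
    (c : ℝ≥0∞)
    (h : ∀ σ ∈ A,
      c < limsup (fun r : ℝ => μ (Metric.ball σ r) / g (ENNReal.ofReal r))
        (nhdsWithin 0 (Set.Ioi 0))) :
    c * Measure.mkMetric g A ≤ μ A := by
  have hgood : ∀ σ ∈ A, ∃ᶠ r in 𝓝[>] 0, c * g (ENNReal.ofReal r) ≤ μ (Metric.ball σ r) :=
    fun σ hσ => (frequently_lt_of_lt_limsup (h := h σ hσ)).mono fun _ hr =>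
      ENNReal.mul_le_of_le_div hr.le
  refine Measure.mul_mkMetric_le_of_forall_exists_cover μ fun U hU hAU δ hδ => ?_
  exact (htree.isUltrametricOn_levelSet ρ a).exists_disjoint_cover
    (measurableSet_eq_fun (by fun_prop) measurable_const) hcarried hAsub hgmono hgcont hgood
    hU hAU hδ

/-- lower comparison lemma on level sets of real trees: if `μ` is a finite
Borel measure on a compact rooted real tree carried by the level set `T(a)` (i.e.
`μ(T \ T(a)) = 0`), `T(a) ≠ ∅`, `g` an increasing continuous gauge with `g 0 = 0`,
`A ⊆ T(a)` Borel, `c ∈ (0,∞)`, and `limsup_{r→0} μ(B(σ,r))/g(r) > c` for every `σ ∈ A`,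
then `μ(A) ≥ c · H_g(A)` (with no multiplicative correction constant). -/
theorem stmt7 {T : Type*} [MetricSpace T] [CompactSpace T]
    [MeasurableSpace T] [BorelSpace T]
    (seg : T → T → Set T) (htree : IsRealTree seg) (ρ : T)
    (a : ℝ) (ha : 0 < a) (hne : {τ : T | dist ρ τ = a}.Nonempty)
    (g : ℝ≥0∞ → ℝ≥0∞) (hg0 : g 0 = 0) (hgmono : Monotone g) (hgcont : Continuous g)
    (μ : Measure T) [IsFiniteMeasure μ]
    (hcarried : μ {τ : T | dist ρ τ = a}ᶜ = 0)
    (A : Set T) (hA : MeasurableSet A) (hAsub : A ⊆ {τ : T | dist ρ τ = a})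
    (c : ℝ≥0∞) (hc0 : 0 < c) (hctop : c ≠ ⊤)
    (h : ∀ σ ∈ A,
      c < limsup (fun r : ℝ => μ (Metric.ball σ r) / g (ENNReal.ofReal r))
        (nhdsWithin 0 (Set.Ioi 0))) :
    c * Measure.mkMetric g A ≤ μ A :=
  stmt7_general seg htree ρ a g hgmono hgcont μ hcarried A hAsub c h
end

section
/- Lower deviation bound for the Feller diffusion: Let (Y_b)_{b≥0} be a Feller diffusion with branching mechanism ψ(λ)=λ² started at x ≥ 0, i.e. a continuous Markov process with E[exp(−λ Y_{b+b'}) | Y_b] = exp(−λ Y_b /(1+b'λ)). Then for all 0 ≤ y ≤ x and a > 0, P(inf_{b∈[0,a]} Y_b ≤ y) ≤ exp(−(√x − √y)²/a). -/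
/-!
For `0 ≤ λ < 1/a` the process `M_t = exp (-λ Y_t / (1 - tλ))`, `t ∈ [0, a]`, is a martingale
with mean `exp (-λx)`: the Laplace transform of the transition from `s` to `t` turns the rate
`λ / (1 - tλ)` into `λ / (1 - sλ)`. If `Y` drops below `y' > y` before time `a`, then `M` exceeds
`exp (-λy' / (1 - aλ))` at that time, so Doob's maximal inequality (on dyadic grids, extended to
`[0, a]` by path continuity) gives `P(inf Y ≤ y) ≤ exp (λy' / (1 - aλ) - λx)`. The choice
`λ = (1 - √(y'/x)) / a` turns the exponent into `-(√x - √y')² / a`, and we let `y' ↓ y`.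
Working with `y' > y` makes the event open in time, and avoids the excluded endpoint `λ = 1/a`
when `y = 0`.
-/

open MeasureTheory

/-- `(Y_b)_{b ≥ 0}` is a Feller diffusion with branching mechanism `ψ(λ) = λ²` started at
`x`: a nonnegative continuous Markov process with `Y_0 = x` whose conditional Laplace
transform given the past up to time `b` satisfies
`E[exp(-λ Y_{b+b'}) | F_b] = exp(-λ Y_b / (1 + b' λ))`. -/
def IsFellerDiffusion {Ω : Type*} [MeasurableSpace Ω] (μ : Measure Ω)
    (Y : ℝ → Ω → ℝ) (x : ℝ) : Prop :=
  (∀ b, Measurable (Y b)) ∧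
  (∀ ω, Continuous fun b => Y b ω) ∧
  (∀ b ω, 0 ≤ Y b ω) ∧
  (∀ ω, Y 0 ω = x) ∧
  ∀ b b' lam : ℝ, 0 ≤ b → 0 ≤ b' → 0 ≤ lam →
    (μ[(fun ω => Real.exp (-(lam * Y (b + b') ω))) |
        MeasurableSpace.comap (fun ω => fun s : Set.Iic b => Y (s : ℝ) ω)
          MeasurableSpace.pi])
      =ᵐ[μ] fun ω => Real.exp (-(Y b ω * lam) / (1 + b' * lam))

open Filter Topology
open scoped NNReal ENNReal

section DyadicGrid

variable {a : ℝ} (ha : 0 ≤ a)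

-- Clamped to `[0, a]` so that the grid is indexed by all of `ℕ`, as Doob's inequality requires.
noncomputable def dyadicGrid (N k : ℕ) : Set.Icc (0 : ℝ) a :=
  Set.projIcc 0 a ha (k / 2 ^ N * a)

theorem monotone_dyadicGrid (N : ℕ) : Monotone (dyadicGrid ha N) := fun k l hkl =>
  Set.monotone_projIcc ha (by gcongr)

theorem dyadicGrid_two_pow (N : ℕ) :
    dyadicGrid ha N (2 ^ N) = ⟨a, Set.right_mem_Icc.2 ha⟩ := by
  simp [dyadicGrid, Set.projIcc_right]

theorem dyadicGrid_succ_two_mul (N k : ℕ) :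
    dyadicGrid ha (N + 1) (2 * k) = dyadicGrid ha N k := by
  simp only [dyadicGrid]
  congr 1
  push_cast
  field_simp
  ring

theorem floor_div_mul_two_pow_le (t : Set.Icc (0 : ℝ) a) (N : ℕ) : ⌊t / a * 2 ^ N⌋₊ ≤ 2 ^ N :=
  Nat.floor_le_of_le <| by
    exact_mod_cast mul_le_of_le_one_left (by positivity)
      (div_le_one_of_le₀ t.2.2 (t.2.1.trans t.2.2))

theorem tendsto_dyadicGrid_floor (t : Set.Icc (0 : ℝ) a) :
    Tendsto (fun N : ℕ => dyadicGrid ha N ⌊t / a * 2 ^ N⌋₊) atTop (𝓝 t) := by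
  rw [tendsto_subtype_rng]
  have hfloor : Tendsto (fun N : ℕ => (⌊t / a * 2 ^ N⌋₊ : ℝ) / 2 ^ N) atTop (𝓝 (t / a)) :=
    (tendsto_nat_floor_mul_div_atTop (div_nonneg t.2.1 ha)).comp
      (tendsto_pow_atTop_atTop_of_one_lt one_lt_two)
  have hval : t / a * a = t :=
    div_mul_cancel_of_imp fun h => le_antisymm (h ▸ t.2.2) t.2.1
  have := ((continuous_subtype_val.comp (continuous_projIcc (h := ha))).tendsto _).comp
    (hfloor.mul_const a)
  simpa [Function.comp_def, hval, dyadicGrid] using this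

end DyadicGrid

namespace MeasureTheory

variable {Ω ι κ : Type*} {m : MeasurableSpace Ω} {μ : Measure Ω} [Preorder ι] [Preorder κ]

def Filtration.reindex (𝓕 : Filtration ι m) (τ : κ → ι) (hτ : Monotone τ) :
    Filtration κ m where
  seq k := 𝓕 (τ k)
  mono' _ _ h := 𝓕.mono (hτ h)
  le' k := 𝓕.le (τ k)

theorem Martingale.reindex {E : Type*} [NormedAddCommGroup E] [NormedSpace ℝ E]
    {f : ι → Ω → E} {𝓕 : Filtration ι m}
    (hf : Martingale f 𝓕 μ) (τ : κ → ι) (hτ : Monotone τ) :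
    Martingale (fun k => f (τ k)) (𝓕.reindex τ hτ) μ :=
  ⟨fun k => hf.stronglyAdapted (τ k), fun _ _ h => hf.condExp_ae_eq (hτ h)⟩

theorem Martingale.mul_measure_exists_lt_le [IsFiniteMeasure μ] {a : ℝ} (ha : 0 ≤ a)
    {M : Set.Icc (0 : ℝ) a → Ω → ℝ} {𝓕 : Filtration (Set.Icc (0 : ℝ) a) m}
    (hM : Martingale M 𝓕 μ) (hnonneg : 0 ≤ M) (hcont : ∀ ω, Continuous fun t => M t ω)
    (ε : ℝ≥0) :
    ε * μ {ω | ∃ t, (ε : ℝ) < M t ω} ≤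
      ENNReal.ofReal (∫ ω, M ⟨a, Set.right_mem_Icc.2 ha⟩ ω ∂μ) := by
  set E : ℕ → Set Ω := fun N => {ω | (ε : ℝ) ≤ (Finset.range (2 ^ N + 1)).sup'
    Finset.nonempty_range_add_one fun k => M (dyadicGrid ha N k) ω}
  have hmem : ∀ N ω, ω ∈ E N ↔ ∃ k ≤ 2 ^ N, (ε : ℝ) ≤ M (dyadicGrid ha N k) ω := by
    intro N ω
    simp [E, Finset.le_sup'_iff]
  have hE_mono : Monotone E := by
    refine monotone_nat_of_le_succ fun N ω hω => ?_
    obtain ⟨k, hk, hεk⟩ := (hmem N ω).1 hω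
    refine (hmem (N + 1) ω).2 ⟨2 * k, by rw [pow_succ]; omega, ?_⟩
    rwa [dyadicGrid_succ_two_mul]
  have hE_bound : ∀ N, ε * μ (E N) ≤
      ENNReal.ofReal (∫ ω, M ⟨a, Set.right_mem_Icc.2 ha⟩ ω ∂μ) := by
    intro N
    have hdisc := (hM.reindex _ (monotone_dyadicGrid ha N)).submartingale
    refine (maximal_ineq hdisc (fun k ω => hnonneg _ ω) (2 ^ N)).trans
      (ENNReal.ofReal_le_ofReal ?_)
    simp only [dyadicGrid_two_pow]
    exact setIntegral_le_integral (hM.integrable _) (ae_of_all _ fun ω => hnonneg _ ω)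
  have hcover : {ω | ∃ t, (ε : ℝ) < M t ω} ⊆ ⋃ N, E N := by
    rintro ω ⟨t, ht⟩
    have hlim := ((hcont ω).tendsto t).comp (tendsto_dyadicGrid_floor ha t)
    obtain ⟨N, hN⟩ := (hlim.eventually (lt_mem_nhds ht)).exists
    exact Set.mem_iUnion.2 ⟨N, (hmem N ω).2 ⟨_, floor_div_mul_two_pow_le t N, hN.le⟩⟩
  calc ε * μ {ω | ∃ t, (ε : ℝ) < M t ω} ≤ ε * μ (⋃ N, E N) := by gcongr
    _ = ⨆ N, ε * μ (E N) := by rw [hE_mono.measure_iUnion, ENNReal.mul_iSup]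
    _ ≤ _ := iSup_le hE_bound

end MeasureTheory

noncomputable def expMartingale {Ω : Type*} (Y : ℝ → Ω → ℝ) (lam t : ℝ) (ω : Ω) : ℝ :=
  Real.exp (-(lam / (1 - t * lam) * Y t ω))

theorem div_one_add_sub_mul_div {lam s t : ℝ} (ht : 1 - t * lam ≠ 0) :
    lam / (1 - t * lam) / (1 + (t - s) * (lam / (1 - t * lam))) = lam / (1 - s * lam) := by
  rw [show 1 + (t - s) * (lam / (1 - t * lam)) = (1 - s * lam) / (1 - t * lam) by
    field_simp; ring, div_div_div_cancel_right₀ ht]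

namespace IsFellerDiffusion

variable {Ω : Type*} [MeasurableSpace Ω] {μ : Measure Ω} {Y : ℝ → Ω → ℝ} {x : ℝ}

def filtration (hY : IsFellerDiffusion μ Y x) : Filtration ℝ ‹MeasurableSpace Ω› :=
  Filtration.natural Y fun b => (hY.1 b).stronglyMeasurable

theorem martingale_expMartingale (hY : IsFellerDiffusion μ Y x) {lam a : ℝ} (hlam : 0 ≤ lam)
    (hla : a * lam < 1) :
    Martingale (fun t : Set.Icc (0 : ℝ) a => expMartingale Y lam t)
      (hY.filtration.reindex Subtype.val (Subtype.mono_coe _)) μ := by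
  refine ⟨fun t => ?_, fun s t hst => ?_⟩
  · have hYt : Measurable[hY.filtration t] (Y t) :=
      (Filtration.stronglyAdapted_natural (fun b => (hY.1 b).stronglyMeasurable) t.1).measurable
    exact (Real.measurable_exp.comp (hYt.const_mul _).neg).stronglyMeasurable
  · have ht : 0 < 1 - t * lam := by nlinarith [t.2.2]
    have hcond := hY.2.2.2.2 s (t - s) (lam / (1 - t * lam)) s.2.1 (sub_nonneg.2 hst)
      (by positivity)
    rw [add_sub_cancel] at hcond
    show μ[expMartingale Y lam t | hY.filtration s] =ᵐ[μ] expMartingale Y lam s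
    rw [filtration, Filtration.natural_eq_comap]
    refine hcond.trans (ae_of_all _ fun ω => ?_)
    dsimp only
    rw [expMartingale, neg_div, mul_div_assoc, div_one_add_sub_mul_div ht.ne', mul_comm]

theorem continuous_expMartingale (hY : IsFellerDiffusion μ Y x) {lam a : ℝ} (hlam : 0 ≤ lam)
    (hla : a * lam < 1) (ω : Ω) :
    Continuous fun t : Set.Icc (0 : ℝ) a => expMartingale Y lam t ω := by
  have hrate : Continuous fun t : Set.Icc (0 : ℝ) a => lam / (1 - t * lam) :=
    continuous_const.div (by fun_prop) fun t => by nlinarith [t.2.2]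
  exact (hrate.mul ((hY.2.1 ω).comp continuous_subtype_val)).neg.rexp

theorem integral_expMartingale [IsProbabilityMeasure μ] (hY : IsFellerDiffusion μ Y x)
    {lam a : ℝ} (hlam : 0 ≤ lam) (ha : 0 ≤ a) (hla : a * lam < 1) :
    ∫ ω, expMartingale Y lam a ω ∂μ = Real.exp (-(lam * x)) := by
  have h := (hY.martingale_expMartingale hlam hla).setIntegral_eq
    (i := ⟨0, Set.left_mem_Icc.2 ha⟩) (j := ⟨a, Set.right_mem_Icc.2 ha⟩) ha MeasurableSet.univ
  simp only [setIntegral_univ] at h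
  rw [← h]
  simp [expMartingale, hY.2.2.2.1]

theorem measure_iInf_le_le_exp [IsProbabilityMeasure μ] (hY : IsFellerDiffusion μ Y x)
    {lam a y y' : ℝ} (hlam : 0 < lam) (ha : 0 ≤ a) (hla : a * lam < 1) (hyy' : y < y') :
    μ {ω | (⨅ b : Set.Icc (0 : ℝ) a, Y b ω) ≤ y} ≤
      ENNReal.ofReal (Real.exp (lam / (1 - a * lam) * y' - lam * x)) := by
  set c := Real.exp (-(lam / (1 - a * lam) * y'))
  have hsub : {ω | (⨅ b : Set.Icc (0 : ℝ) a, Y b ω) ≤ y} ⊆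
      {ω | ∃ t : Set.Icc (0 : ℝ) a, (c.toNNReal : ℝ) < expMartingale Y lam t ω} := by
    intro ω hω
    have : Nonempty (Set.Icc (0 : ℝ) a) := (Set.nonempty_Icc.2 ha).to_subtype
    obtain ⟨t, ht⟩ := exists_lt_of_ciInf_lt (lt_of_le_of_lt hω hyy')
    refine ⟨t, ?_⟩
    rw [Real.coe_toNNReal _ (Real.exp_pos _).le, expMartingale, Real.exp_lt_exp, neg_lt_neg_iff]
    calc lam / (1 - t * lam) * Y t ω ≤ lam / (1 - a * lam) * Y t ω := by
          gcongr
          · exact hY.2.2.1 _ _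
          · exact t.2.2
      _ < lam / (1 - a * lam) * y' := by gcongr
  have hmax := (hY.martingale_expMartingale hlam.le hla).mul_measure_exists_lt_le ha
    (fun t ω => (Real.exp_pos _).le) (hY.continuous_expMartingale hlam.le hla) c.toNNReal
  rw [integral_expMartingale hY hlam.le ha hla] at hmax
  calc μ {ω | (⨅ b : Set.Icc (0 : ℝ) a, Y b ω) ≤ y}
      ≤ ENNReal.ofReal (Real.exp (-(lam * x))) / ENNReal.ofReal c := by
        refine (measure_mono hsub).trans ?_
        rw [ENNReal.le_div_iff_mul_le (by simp [c, Real.exp_pos]) (by simp), mul_comm]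
        exact hmax
    _ = ENNReal.ofReal (Real.exp (lam / (1 - a * lam) * y' - lam * x)) := by
        rw [← ENNReal.ofReal_div_of_pos (Real.exp_pos _), ← Real.exp_sub]
        ring_nf

end IsFellerDiffusion

theorem exists_optimal_exponent {a x y : ℝ} (ha : 0 < a) (hy : 0 < y) (hyx : y < x) :
    ∃ lam, 0 < lam ∧ a * lam < 1 ∧
      lam / (1 - a * lam) * y - lam * x = -(Real.sqrt x - Real.sqrt y) ^ 2 / a := by
  have hx2 : Real.sqrt x ^ 2 = x := Real.sq_sqrt (hy.trans hyx).le
  have hy2 : Real.sqrt y ^ 2 = y := Real.sq_sqrt hy.le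
  set u := Real.sqrt x
  set v := Real.sqrt y
  have hv : 0 < v := Real.sqrt_pos.2 hy
  have hvu : v < u := Real.sqrt_lt_sqrt hy.le hyx
  have hu : 0 < u := hv.trans hvu
  have h1 : 1 - a * ((u - v) / (a * u)) = v / u := by
    field_simp
    ring
  refine ⟨(u - v) / (a * u), div_pos (by linarith) (by positivity), ?_, ?_⟩
  · linarith [div_pos hv hu]
  · rw [h1, ← hx2, ← hy2]
    field_simp
    ring

theorem stmt10_general {Ω : Type*} [MeasurableSpace Ω] (μ : Measure Ω) [IsProbabilityMeasure μ]
    (Y : ℝ → Ω → ℝ) (x y a : ℝ)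
    (hY : IsFellerDiffusion μ Y x)
    (hy0 : 0 ≤ y) (hyx : y ≤ x) (ha : 0 < a) :
    μ {ω | (⨅ b : Set.Icc (0:ℝ) a, Y (b : ℝ) ω) ≤ y}
      ≤ ENNReal.ofReal (Real.exp (-(Real.sqrt x - Real.sqrt y) ^ 2 / a)) := by
  rcases hyx.eq_or_lt with rfl | hyx
  · simpa using prob_le_one
  have hbound : ∀ y' ∈ Set.Ioo y x, μ {ω | (⨅ b : Set.Icc (0:ℝ) a, Y (b : ℝ) ω) ≤ y}
      ≤ ENNReal.ofReal (Real.exp (-(Real.sqrt x - Real.sqrt y') ^ 2 / a)) := by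
    rintro y' ⟨hyy', hy'x⟩
    obtain ⟨lam, hlam, hla, hrate⟩ := exists_optimal_exponent ha (hy0.trans_lt hyy') hy'x
    simpa only [hrate] using hY.measure_iInf_le_le_exp hlam ha.le hla hyy'
  have hcont : Continuous fun y' =>
      ENNReal.ofReal (Real.exp (-(Real.sqrt x - Real.sqrt y') ^ 2 / a)) :=
    ENNReal.continuous_ofReal.comp (by fun_prop)
  exact ge_of_tendsto ((hcont.tendsto y).mono_left nhdsWithin_le_nhds)
    (eventually_of_mem (Ioo_mem_nhdsGT hyx) hbound)

/-- lower deviation bound for the Feller diffusion: if `(Y_b)` is a Feller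
diffusion with branching mechanism `λ²` started at `x ≥ 0`, then for all `0 ≤ y ≤ x` and
`a > 0`, `P(inf_{b ∈ [0,a]} Y_b ≤ y) ≤ exp(-(√x - √y)²/a)`. -/
theorem stmt10 {Ω : Type*} [MeasurableSpace Ω] (μ : Measure Ω) [IsProbabilityMeasure μ]
    (Y : ℝ → Ω → ℝ) (x y a : ℝ) (hx : 0 ≤ x)
    (hY : IsFellerDiffusion μ Y x)
    (hy0 : 0 ≤ y) (hyx : y ≤ x) (ha : 0 < a) :
    μ {ω | (⨅ b : Set.Icc (0:ℝ) a, Y (b : ℝ) ω) ≤ y}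
      ≤ ENNReal.ofReal (Real.exp (-(Real.sqrt x - Real.sqrt y) ^ 2 / a)) :=
  stmt10_general μ Y x y a hY hy0 hyx ha
end
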